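/- (Propagation preserves the unobservable directions of the imperfect augmented system.) For every gravity vector g ∈ ℝ³, arbitrary estimates R̂_I ∈ ℝ^{3×3}, v̂, p̂_I, p̂_f, p̂_G ∈ ℝ³, arbitrary R_G ∈ ℝ^{3×3} and p_F ∈ ℝ³, the 33×33 imperfect-system propagation matrix A* satisfies A* N*₁ = 0; consequently the state-transition matrix exp(δ A*) satisfies exp(δ A*) N*₁ = N*₁ for every δ ∈ ℝ. -/

import Mathlib

/-! `A*` only reads the attitude, velocity and bias blocks of the error state. `N*₁` vanishes on
the velocity and bias blocks, and its attitude block is `g e₁ᵀ`, which `(g)_×` annihilates because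
`g × g = 0`; hence `A* N*₁ = 0`. Every term of the exponential series of `exp(δ A*) N*₁` except the
zeroth then contains the factor `A* N*₁`. -/

open Matrix

abbrev V3 := Fin 3 → ℝ
abbrev M3 := Matrix (Fin 3) (Fin 3) ℝ

/-- The cross-product (skew-symmetric) matrix `(a)_×`. -/
def skew (a : V3) : M3 :=
  !![0, -a 2, a 1; a 2, 0, -a 0; -a 1, a 0, 0]

/-- Row/column index of the 33-dimensional right-invariant error
`(ξ_θ, ξ_v, ξ_p, ξ_pf, ξ_pG, ξ_θG, ξ_bg, ξ_ba, ξ_θKF, ξ_pKF, ξ_F)`: 11 blocks of 3. -/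
abbrev Idx33 := Fin 11 × Fin 3

/-- Column index for the 33×10 unobservable-direction matrix:
one single column followed by three 3-column blocks. -/
abbrev Cols10 := Fin 1 ⊕ Fin 3 × Fin 3

/-- 33×33 matrix from an 11×11 table of 3×3 blocks. -/
def bm11 (f : Fin 11 → Fin 11 → M3) : Matrix Idx33 Idx33 ℝ :=
  Matrix.of fun p q => f p.1 q.1 p.2 q.2

/-- The 33×33 propagation matrix `A*` of the imperfect augmented system:
the upper-left 24×24 block is the perfect-system propagation matrix,
all other entries are zero. -/
def AStar (g : V3) (RI : M3) (v pI pf pG : V3) : Matrix Idx33 Idx33 ℝ :=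
  bm11 ![![0, 0, 0, 0, 0, 0, -RI, 0, 0, 0, 0],
         ![skew g, 0, 0, 0, 0, 0, -(skew v * RI), -RI, 0, 0, 0],
         ![0, 1, 0, 0, 0, 0, -(skew pI * RI), 0, 0, 0, 0],
         ![0, 0, 0, 0, 0, 0, -(skew pf * RI), 0, 0, 0, 0],
         ![0, 0, 0, 0, 0, 0, -(skew pG * RI), 0, 0, 0, 0],
         ![0, 0, 0, 0, 0, 0, 0, 0, 0, 0, 0],
         ![0, 0, 0, 0, 0, 0, 0, 0, 0, 0, 0],
         ![0, 0, 0, 0, 0, 0, 0, 0, 0, 0, 0],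
         ![0, 0, 0, 0, 0, 0, 0, 0, 0, 0, 0],
         ![0, 0, 0, 0, 0, 0, 0, 0, 0, 0, 0],
         ![0, 0, 0, 0, 0, 0, 0, 0, 0, 0, 0]]

/-- The 33×10 unobservable-direction matrix `N*₁` (parametric in `R_G`; `N*₃` is the
same matrix evaluated at the first-estimate `R̂_{G0}`). -/
def NStar1 (g pF : V3) (RG : M3) : Matrix Idx33 Cols10 ℝ :=
  Matrix.of fun p j =>
    Sum.elim
      (fun _ => (![g, 0, 0, 0, 0, g, 0, 0, 0, 0, 0] : Fin 11 → V3) p.1 p.2)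
      (fun q =>
        (![![0, 0, 0], ![0, 0, 0], ![1, 0, 0], ![1, 0, 0], ![1, -RG, 0],
           ![0, 0, 1], ![0, 0, 0], ![0, 0, 0], ![0, 0, -RGᵀ], ![0, 1, 0],
           ![0, 1, skew pF * RGᵀ]] : Fin 11 → Fin 3 → M3) p.1 q.1 p.2 q.2) j

/-- A 2×33 measurement Jacobian `B ⬝ [f₀ ⋯ f₁₀]` from a 2×3 factor `B`
and an 11-tuple of 3×3 blocks. -/
def rowJac (B : Matrix (Fin 2) (Fin 3) ℝ) (f : Fin 11 → M3) : Matrix (Fin 2) Idx33 ℝ :=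
  Matrix.of fun r p => (B * f p.1) r p.2

open NormedSpace Nat in
open scoped Norms.Operator in
theorem Matrix.exp_mul_of_mul_eq_zero {𝕂 ι κ : Type*} [RCLike 𝕂] [Fintype ι] [DecidableEq ι]
    {A : Matrix ι ι 𝕂} {N : Matrix ι κ 𝕂} (h : A * N = 0) : exp A * N = N := by
  have hexp : HasSum (fun n : ℕ => ((n ! : 𝕂)⁻¹ • A ^ n) * N) (exp A * N) :=
    (exp_series_hasSum_exp' (𝕂 := 𝕂) A).map (AddMonoidHom.mk' (· * N) (Matrix.add_mul · · N))
      (continuous_id.matrix_mul continuous_const)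
  have hterms : HasSum (fun n : ℕ => ((n ! : 𝕂)⁻¹ • A ^ n) * N) N := by
    convert hasSum_single 0 fun n hn => ?_
    · simp
    · obtain ⟨m, rfl⟩ := Nat.exists_eq_succ_of_ne_zero hn
      rw [Matrix.smul_mul, pow_succ, Matrix.mul_assoc, h, Matrix.mul_zero, smul_zero]
  exact hexp.unique hterms

theorem skew_mulVec (a b : V3) : skew a *ᵥ b = a ⨯₃ b := by
  ext i
  fin_cases i <;>
    simp only [skew, cross_apply, mulVec, vec3_dotProduct, of_apply, cons_val', cons_val_fin_one,
      cons_val, cons_val_zero, cons_val_one, Fin.isValue, Fin.zero_eta, Fin.mk_one,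
      Fin.reduceFinMk] <;>
    ring

theorem skew_mulVec_self (a : V3) : skew a *ᵥ a = 0 := by
  rw [skew_mulVec, cross_self]

def blockRow {κ : Type*} (N : Matrix Idx33 κ ℝ) (k : Fin 11) : Matrix (Fin 3) κ ℝ :=
  of fun b j => N (k, b) j

theorem bm11_mul_eq_zero {κ : Type*} {F : Fin 11 → Fin 11 → M3} {N : Matrix Idx33 κ ℝ}
    (h : ∀ i, ∑ k, F i k * blockRow N k = 0) : bm11 F * N = 0 := by
  ext ⟨i, a⟩ j
  simpa [mul_apply, Fintype.sum_prod_type, bm11, blockRow, Matrix.sum_apply] using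
    congr_fun₂ (h i) a j

theorem AStar_mul_eq_zero {κ : Type*} {g : V3} {RI : M3} {v pI pf pG : V3}
    {N : Matrix Idx33 κ ℝ} (hθ : skew g * blockRow N 0 = 0) (hv : blockRow N 1 = 0)
    (hbg : blockRow N 6 = 0) (hba : blockRow N 7 = 0) : AStar g RI v pI pf pG * N = 0 := by
  refine bm11_mul_eq_zero fun i => ?_
  fin_cases i <;> simp [Fin.sum_univ_succ, hθ, hv, hbg, hba]

theorem blockRow_NStar1_zero (g pF : V3) (RG : M3) :
    blockRow (NStar1 g pF RG) 0 = vecMulVec g (Sum.elim 1 0) := by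
  ext b (_ | ⟨c, d⟩)
  · exact (mul_one (g b)).symm
  · fin_cases c <;> exact (mul_zero (g b)).symm

theorem skew_mul_blockRow_NStar1_zero (g pF : V3) (RG : M3) :
    skew g * blockRow (NStar1 g pF RG) 0 = 0 := by
  rw [blockRow_NStar1_zero, mul_vecMulVec, skew_mulVec_self, zero_vecMulVec]

theorem blockRow_NStar1_eq_zero (g pF : V3) (RG : M3) {k : Fin 11}
    (hk : k = 1 ∨ k = 6 ∨ k = 7) : blockRow (NStar1 g pF RG) k = 0 := by
  rcases hk with rfl | rfl | rfl <;> ext _ (_ | ⟨c, _⟩) <;> (try fin_cases c) <;> rfl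

/-- Propagation preserves the unobservable directions of the imperfect augmented
system: `A* N*₁ = 0`, hence `exp(δ A*) N*₁ = N*₁` for every `δ`. -/
theorem AStar_annihilates_NStar1 (g : V3) (RI : M3) (v pI pf pG : V3)
    (RG : M3) (pF : V3) :
    AStar g RI v pI pf pG * NStar1 g pF RG = 0 ∧
    ∀ δ : ℝ, NormedSpace.exp (δ • AStar g RI v pI pf pG) * NStar1 g pF RG =
      NStar1 g pF RG := by
  have hAN : AStar g RI v pI pf pG * NStar1 g pF RG = 0 :=
    AStar_mul_eq_zero (skew_mul_blockRow_NStar1_zero g pF RG)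
      (blockRow_NStar1_eq_zero g pF RG (by simp)) (blockRow_NStar1_eq_zero g pF RG (by simp))
      (blockRow_NStar1_eq_zero g pF RG (by simp))
  refine ⟨hAN, fun δ => Matrix.exp_mul_of_mul_eq_zero ?_⟩
  rw [Matrix.smul_mul, hAN, smul_zero]
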